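/- arXiv:1604.07162 — 2 statements merged into one kernel-verified Lean document; each statement's English description precedes it below -/
import Mathlib

section
/- Let I be a finite type with a distinguished element 0 and an involution i ↦ i' satisfying 0' = 0. Let S be an I × I complex matrix which is symmetric (Sᵀ = S) and satisfies S·S = C, where C is the charge-conjugation matrix C i j = 1 if i = j' and C i j = 0 otherwise, and assume S 0 s ≠ 0 for every s ∈ I. Define the Verlinde fusion numbers N i j k = Σ_{s ∈ I} S i s · S j s · S k' s / S 0 s. For a coefficient vector a : I → ℂ define the extended S-entry Ŝ a l = Σ_{i ∈ I} a i · S i l. Given two coefficient vectors a, b : I → ℂ, define their fusion-product coefficient vector c : I → ℂ by c k = Σ_{i,j ∈ I} a i · b j · N i j k. Then for every l ∈ I: Ŝ c l = (Ŝ a l · Ŝ b l) / S 0 l. (This is the paper's Lemma 3.4: for arbitrary, not necessarily irreducible, modules U = ⊕ a_i M^i and W = ⊕ b_j M^j one has S_{U⊠W, M^l} = S_{U,M^l} S_{W,M^l} / S_{V,M^l}, using the extended definition of S-matrix entries.) -/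
/-!
Since `S² = C` and `C² = 1`, one has `S C S = 1`, i.e. `∑ₖ S_{k' s} S_{k l} = δ_{s l}`.
So `k ↦ N i j k` is the inverse `S`-transform of `s ↦ S_{i s} S_{j s} / S_{0 s}`, whence
`∑ₖ N i j k S_{k l} = S_{i l} S_{j l} / S_{0 l}`; summing against `a i b j` gives the claim.
-/

open Finset Matrix Function

namespace ModularData

variable {I R : Type*} [Fintype I] [DecidableEq I]

def chargeConj [Zero R] [One R] (p : I → I) : Matrix I I R :=
  of fun i j => if i = p j then 1 else 0

theorem mul_chargeConj_apply [NonAssocSemiring R] (M : Matrix I I R) (p : I → I) (i j : I) :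
    (M * chargeConj p : Matrix I I R) i j = M i (p j) := by
  simp [chargeConj, mul_apply]

theorem chargeConj_mul_chargeConj [NonAssocSemiring R] {p : I → I} (hp : Involutive p) :
    chargeConj p * chargeConj p = (1 : Matrix I I R) := by
  ext i j
  rw [mul_chargeConj_apply, chargeConj, of_apply, hp j, one_apply]

variable {p : I → I} {S : Matrix I I R}

theorem mul_chargeConj_mul_eq_one [Semiring R] (hp : Involutive p)
    (hSS : S * S = chargeConj p) : S * chargeConj p * S = 1 := by
  calc S * chargeConj p * S = S * S * (S * S) := by simp only [← hSS, Matrix.mul_assoc]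
    _ = 1 := by rw [hSS, chargeConj_mul_chargeConj hp]

theorem sum_apply_involution_mul [CommSemiring R] (hp : Involutive p) (hsym : Sᵀ = S)
    (hSS : S * S = chargeConj p) (s l : I) :
    ∑ k, S (p k) s * S k l = if s = l then 1 else 0 := by
  have h := congrFun (congrFun (mul_chargeConj_mul_eq_one hp hSS) s) l
  rw [mul_apply, one_apply] at h
  rw [← h]
  refine sum_congr rfl fun k _ => ?_
  rw [mul_chargeConj_apply, ← transpose_apply S (p k), hsym]

theorem sum_sum_mul_apply_involution_mul [CommSemiring R] (hp : Involutive p) (hsym : Sᵀ = S)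
    (hSS : S * S = chargeConj p) (f : I → R) (l : I) :
    ∑ k, (∑ s, f s * S (p k) s) * S k l = f l := by
  simp_rw [sum_mul, mul_assoc]
  rw [sum_comm]
  simp_rw [← mul_sum, sum_apply_involution_mul hp hsym hSS]
  simp

theorem sum_verlinde_mul [Field R] (hp : Involutive p) (hsym : Sᵀ = S)
    (hSS : S * S = chargeConj p) (z i j l : I) :
    ∑ k, (∑ s, S i s * S j s * S (p k) s / S z s) * S k l = S i l * S j l / S z l := by
  simp_rw [div_eq_mul_inv, mul_right_comm _ (S (p _) _)]
  exact sum_sum_mul_apply_involution_mul hp hsym hSS (fun s => S i s * S j s * (S z s)⁻¹) l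

end ModularData

open ModularData

/-- Here `z` is the distinguished index `0` and `p` is the involution `i ↦ i'`. -/
theorem stmt_4_general {I : Type*} [Fintype I] [DecidableEq I]
    (z : I) (p : I → I) (hp : ∀ i, p (p i) = i)
    (S : Matrix I I ℂ) (hsym : S.transpose = S)
    (hSS : S * S = Matrix.of fun i j => if i = p j then (1 : ℂ) else 0)
    (N : I → I → I → ℂ)
    (hN : ∀ i j k, N i j k = ∑ s, S i s * S j s * S (p k) s / S z s)
    (Shat : (I → ℂ) → I → ℂ)
    (hShat : ∀ a l, Shat a l = ∑ i, a i * S i l)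
    (a b c : I → ℂ)
    (hc : ∀ k, c k = ∑ i, ∑ j, a i * b j * N i j k) :
    ∀ l, Shat c l = Shat a l * Shat b l / S z l := by
  intro l
  have hfusion : ∀ i j, ∑ k, N i j k * S k l = S i l * S j l / S z l := fun i j => by
    simp_rw [hN]; exact sum_verlinde_mul hp hsym hSS z i j l
  calc Shat c l = ∑ i, ∑ j, a i * b j * ∑ k, N i j k * S k l := by
        simp_rw [hShat, hc, sum_mul, mul_sum, mul_assoc]
        rw [sum_comm]
        exact sum_congr rfl fun i _ => sum_comm
    _ = Shat a l * Shat b l / S z l := by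
        simp_rw [hfusion, hShat, sum_mul_sum, sum_div]
        exact sum_congr rfl fun i _ => sum_congr rfl fun j _ => by ring

/-- Lemma 3.4, extended S-entries: for coefficient vectors
`a b : I → ℂ`, with extended S-entry `Ŝ a l = Σ_i a i · S i l` and
fusion-product coefficient vector `c k = Σ_{i,j} a i · b j · N i j k`, one has
`Ŝ c l = Ŝ a l · Ŝ b l / S 0 l` for every `l`. Here `z` plays the role of the
distinguished index `0` and `p` is the involution `i ↦ i'`. -/
theorem stmt_4 {I : Type*} [Fintype I] [DecidableEq I]
    (z : I) (p : I → I) (hp : ∀ i, p (p i) = i) (hz : p z = z)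
    (S : Matrix I I ℂ) (hsym : S.transpose = S)
    (hSS : S * S = Matrix.of fun i j => if i = p j then (1 : ℂ) else 0)
    (hS0 : ∀ s, S z s ≠ 0)
    (N : I → I → I → ℂ)
    (hN : ∀ i j k, N i j k = ∑ s, S i s * S j s * S (p k) s / S z s)
    (Shat : (I → ℂ) → I → ℂ)
    (hShat : ∀ a l, Shat a l = ∑ i, a i * S i l)
    (a b c : I → ℂ)
    (hc : ∀ k, c k = ∑ i, ∑ j, a i * b j * N i j k) :
    ∀ l, Shat c l = Shat a l * Shat b l / S z l :=
  stmt_4_general z p hp S hsym hSS N hN Shat hShat a b c hc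
end

section
/- Let I be a finite type with a distinguished element 0 and an involution i ↦ i' satisfying 0' = 0. Let S be an I × I complex matrix which is symmetric (Sᵀ = S) and satisfies S·S = C, where C is the charge-conjugation matrix C i j = 1 if i = j' and C i j = 0 otherwise, and assume S 0 s ≠ 0 for every s ∈ I. Define the Verlinde fusion numbers N i j k = Σ_{s ∈ I} S i s · S j s · S k' s / S 0 s, and for fixed i let N(i) be the I × I matrix with entries N(i) j k = N i j k. Then S⁻¹ · N(i) · S equals the diagonal matrix with diagonal entries S i s / S 0 s (s ∈ I); equivalently, the S-matrix diagonalizes every fusion matrix N(i) with eigenvalues S i s / S 0 s. (Matrix form of Theorem 2.2(4).) -/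
/-! Since the charge-conjugation matrix `C` is an involutive permutation matrix, `S * S = C`
gives `S⁻¹ = S * C`, whose entries are `S s (p k) = S (p k) s` by symmetry. Hence the
Verlinde formula reads `N(i) = S * diag (S i s / S 0 s) * S⁻¹`. -/

open Matrix

section

variable {R I : Type*} [CommRing R] [Fintype I] [DecidableEq I]

def chargeConj (p : I → I) : Matrix I I R :=
  of fun i j => if i = p j then 1 else 0

theorem mul_chargeConj_apply (p : I → I) (A : Matrix I I R) (i k : I) :
    (A * chargeConj p : Matrix I I R) i k = A i (p k) := by
  simp [chargeConj, mul_apply]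

theorem chargeConj_mul_self {p : I → I} (hp : Function.Involutive p) :
    chargeConj p * chargeConj p = (1 : Matrix I I R) := by
  ext i k
  rw [mul_chargeConj_apply, chargeConj, of_apply, hp k, one_apply]

variable {p : I → I} {S : Matrix I I R}

theorem mul_mul_chargeConj_eq_one (hp : Function.Involutive p)
    (hSS : S * S = chargeConj p) : S * (S * chargeConj p) = 1 := by
  rw [← Matrix.mul_assoc, hSS, chargeConj_mul_self hp]

theorem inv_eq_mul_chargeConj (hp : Function.Involutive p) (hSS : S * S = chargeConj p) :
    S⁻¹ = S * chargeConj p :=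
  inv_eq_right_inv (mul_mul_chargeConj_eq_one hp hSS)

theorem of_sum_eq_mul_diagonal_mul_inv (hp : Function.Involutive p) (hsym : Sᵀ = S)
    (hSS : S * S = chargeConj p) (d : I → R) :
    of (fun j k => ∑ s, S j s * d s * S (p k) s) = S * diagonal d * S⁻¹ := by
  ext j k
  rw [inv_eq_mul_chargeConj hp hSS, mul_apply]
  refine Finset.sum_congr rfl fun s _ => ?_
  rw [mul_diagonal, mul_chargeConj_apply, ← transpose_apply S (p k), hsym]

theorem inv_mul_of_sum_mul_eq_diagonal (hp : Function.Involutive p) (hsym : Sᵀ = S)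
    (hSS : S * S = chargeConj p) (d : I → R) :
    S⁻¹ * of (fun j k => ∑ s, S j s * d s * S (p k) s) * S = diagonal d := by
  have hdet : IsUnit S.det := isUnit_det_of_right_inverse (mul_mul_chargeConj_eq_one hp hSS)
  rw [of_sum_eq_mul_diagonal_mul_inv hp hsym hSS, Matrix.mul_assoc, Matrix.mul_assoc,
    nonsing_inv_mul S hdet, Matrix.mul_one, ← Matrix.mul_assoc, nonsing_inv_mul S hdet,
    Matrix.one_mul]

end

theorem stmt_5_general {I : Type*} [Fintype I] [DecidableEq I]
    (z : I) (p : I → I) (hp : ∀ i, p (p i) = i)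
    (S : Matrix I I ℂ) (hsym : S.transpose = S)
    (hSS : S * S = Matrix.of fun i j => if i = p j then (1 : ℂ) else 0)
    (N : I → I → I → ℂ)
    (hN : ∀ i j k, N i j k = ∑ s, S i s * S j s * S (p k) s / S z s)
    (Nmat : I → Matrix I I ℂ)
    (hNmat : ∀ i j k, Nmat i j k = N i j k) :
    ∀ i, S⁻¹ * Nmat i * S = Matrix.diagonal (fun s => S i s / S z s) := by
  intro i
  have hNmat_eq : Nmat i = of fun j k => ∑ s, S j s * (S i s / S z s) * S (p k) s := by
    ext j k
    rw [hNmat, hN, of_apply]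
    exact Finset.sum_congr rfl fun s _ => by ring
  rw [hNmat_eq]
  exact inv_mul_of_sum_mul_eq_diagonal hp hsym hSS _

/-- matrix form of Theorem 2.2(4): the S-matrix diagonalizes
every fusion matrix `N(i) = (N i j k)_{j,k}`, i.e.
`S⁻¹ · N(i) · S = diag (S i s / S 0 s)`. Here `z` plays the role of the
distinguished index `0` and `p` is the involution `i ↦ i'`. -/
theorem stmt_5 {I : Type*} [Fintype I] [DecidableEq I]
    (z : I) (p : I → I) (hp : ∀ i, p (p i) = i) (hz : p z = z)
    (S : Matrix I I ℂ) (hsym : S.transpose = S)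
    (hSS : S * S = Matrix.of fun i j => if i = p j then (1 : ℂ) else 0)
    (hS0 : ∀ s, S z s ≠ 0)
    (N : I → I → I → ℂ)
    (hN : ∀ i j k, N i j k = ∑ s, S i s * S j s * S (p k) s / S z s)
    (Nmat : I → Matrix I I ℂ)
    (hNmat : ∀ i j k, Nmat i j k = N i j k) :
    ∀ i, S⁻¹ * Nmat i * S = Matrix.diagonal (fun s => S i s / S z s) :=
  stmt_5_general z p hp S hsym hSS N hN Nmat hNmat
end
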